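/- arXiv:1307.8291 — 3 statements merged into one kernel-verified Lean document; each statement's English description precedes it below -/
import Mathlib

section
/- Let f : I ⊂ [0,∞) → ℝ be differentiable on I°, m ∈ (0,1], ma, b ∈ I° with a < b, and suppose f' is integrable on [ma, mb]. If |f'|^q is (α,m)-convex on [ma,b] for some fixed q > 1 and (α,m) ∈ [0,1]², then for every θ > 0, with p = q/(q−1), the Simpson-type inequality holds: |(1/6)[f(ma) + 4 f(m(a+b)/2) + f(mb)] − (Γ(θ+1) 2^{θ−1}/(m^θ (b−a)^θ)) [J_{(m(a+b)/2)−}^θ f(ma) + J_{(m(a+b)/2)+}^θ f(mb)]| ≤ (m(b−a)/4) (∫₀¹ |t^θ − 1/3|^p dt)^{1/p} { ((|f'(m(a+b)/2)|^q + αm |f'(a)|^q)/(α+1))^{1/q} + ((|f'(m(a+b)/2)|^q + αm |f'(b)|^q)/(α+1))^{1/q} }. -/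
open MeasureTheory Set intervalIntegral Real

/-- Riemann-Liouville fractional integral `J_{d^-}^θ f(c) = (1/Γ(θ)) ∫_c^d (t-c)^(θ-1) f(t) dt`. -/
noncomputable def rlLeft (θ c d : ℝ) (f : ℝ → ℝ) : ℝ :=
  (1 / Real.Gamma θ) * ∫ t in c..d, (t - c) ^ (θ - 1) * f t

/-- Riemann-Liouville fractional integral `J_{c^+}^θ f(d) = (1/Γ(θ)) ∫_c^d (d-t)^(θ-1) f(t) dt`. -/
noncomputable def rlRight (θ c d : ℝ) (f : ℝ → ℝ) : ℝ :=
  (1 / Real.Gamma θ) * ∫ t in c..d, (d - t) ^ (θ - 1) * f t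

/-- The quantity `S_f(mx, λ, θ, ma, mb)` from the paper. -/
noncomputable def Sf (f : ℝ → ℝ) (m a b x lam θ : ℝ) : ℝ :=
  (1 - lam) * m ^ (θ - 1) * (((x - a) ^ θ + (b - x) ^ θ) / (b - a)) * f (m * x)
  + lam * m ^ (θ - 1) * (((x - a) ^ θ * f (m * a) + (b - x) ^ θ * f (m * b)) / (b - a))
  - Real.Gamma (θ + 1) / (m * (b - a)) *
      (rlLeft θ (m * a) (m * x) f + rlRight θ (m * x) (m * b) f)

/-- `(α,m)`-convexity of `g` on the interval `[c,d]`. -/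
def AlphaMConvexOn (α m c d : ℝ) (g : ℝ → ℝ) : Prop :=
  ∀ u ∈ Set.Icc c d, ∀ v ∈ Set.Icc c d, ∀ t ∈ Set.Icc (0:ℝ) 1,
    t * u + m * (1 - t) * v ∈ Set.Icc c d →
      g (t * u + m * (1 - t) * v) ≤ t ^ α * g u + m * (1 - t ^ α) * g v

noncomputable def A1 (θ lam : ℝ) : ℝ := (2 * θ * lam ^ (1 + 1 / θ) + 1) / (θ + 1) - lam

noncomputable def A2 (α θ lam : ℝ) : ℝ :=
  2 * θ * lam ^ (1 + (1 + α) / θ) / ((α + 1) * (α + θ + 1)) + 1 / (α + θ + 1) - lam / (α + 1)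

noncomputable def A3 (α θ lam : ℝ) : ℝ := A1 θ lam - A2 α θ lam


/-! With `c` the midpoint and `B` the half-length of `[ma, mb]`, integrating
`(t^θ - 1/3) f'(c - B + B t)` and `(t^θ - 1/3) f'(c + B - B t)` by parts over `[0, 1]` gives the
Simpson weights as boundary terms and, after substituting `x = c ∓ B ± B t`, the two
Riemann–Liouville integrals; hence the Simpson-type error is `B/2` times the difference of these
two kernel integrals. Hölder's inequality bounds each by the `L^p` norm of `t^θ - 1/3` times the
`L^q` norm of `f'` on the segment from `c` towards `a` (resp. `b`), where `(α,m)`-convexity gives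
`|f'|^q ≤ t^α |f'(c)|^q + m (1 - t^α) |f'(a)|^q`, whose integral is the `L^q` factor. -/
theorem rlLeft_add_eq_integral (θ A : ℝ) {B : ℝ} (hB : 0 < B) (f : ℝ → ℝ) :
    rlLeft θ A (A + B) f =
      B ^ θ / Gamma θ * ∫ t in (0:ℝ)..1, t ^ (θ - 1) * f (A + B * t) := by
  have hsub : ∫ t in (0:ℝ)..1, (A + B * t - A) ^ (θ - 1) * f (A + B * t) =
      B ^ (θ - 1) * ∫ t in (0:ℝ)..1, t ^ (θ - 1) * f (A + B * t) := by
    rw [← intervalIntegral.integral_const_mul]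
    refine integral_congr fun t ht => ?_
    rw [uIcc_of_le zero_le_one] at ht
    simp only [add_sub_cancel_left, mul_rpow hB.le ht.1, mul_assoc]
  have hchange := integral_comp_add_mul (fun u => (u - A) ^ (θ - 1) * f u) hB.ne' A
    (a := 0) (b := 1)
  simp only [mul_zero, add_zero, mul_one, smul_eq_mul, hsub] at hchange
  rw [rlLeft, ← (eq_inv_mul_iff_mul_eq₀ hB.ne').mp hchange, rpow_sub_one hB.ne']
  field_simp

theorem rlRight_add_eq_integral (θ A : ℝ) {B : ℝ} (hB : 0 < B) (f : ℝ → ℝ) :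
    rlRight θ A (A + B) f =
      B ^ θ / Gamma θ * ∫ t in (0:ℝ)..1, t ^ (θ - 1) * f (A + B - B * t) := by
  have hsub : ∫ t in (0:ℝ)..1, (A + B - (A + B - B * t)) ^ (θ - 1) * f (A + B - B * t) =
      B ^ (θ - 1) * ∫ t in (0:ℝ)..1, t ^ (θ - 1) * f (A + B - B * t) := by
    rw [← intervalIntegral.integral_const_mul]
    refine integral_congr fun t ht => ?_
    rw [uIcc_of_le zero_le_one] at ht
    simp only [sub_sub_cancel, mul_rpow hB.le ht.1, mul_assoc]
  have hchange := integral_comp_sub_mul (fun u => (A + B - u) ^ (θ - 1) * f u) hB.ne' (A + B)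
    (a := 0) (b := 1)
  simp only [mul_zero, sub_zero, mul_one, add_sub_cancel_right, smul_eq_mul, hsub] at hchange
  rw [rlRight, ← (eq_inv_mul_iff_mul_eq₀ hB.ne').mp hchange, rpow_sub_one hB.ne']
  field_simp

theorem integral_rpow_sub_mul_deriv {F F' : ℝ → ℝ} {θ : ℝ} (hθ : 0 < θ) (κ : ℝ)
    (hF : ∀ t ∈ uIcc (0:ℝ) 1, HasDerivAt F (F' t) t)
    (hF' : IntervalIntegrable F' volume 0 1) :
    ∫ t in (0:ℝ)..1, (t ^ θ - κ) * F' t =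
      (1 - κ) * F 1 + κ * F 0 - θ * ∫ t in (0:ℝ)..1, t ^ (θ - 1) * F t := by
  have hk : ContinuousOn (fun t : ℝ => t ^ θ - κ) (uIcc 0 1) :=
    ((continuous_rpow_const hθ.le).sub continuous_const).continuousOn
  have hk' : IntervalIntegrable (fun t => θ * t ^ (θ - 1)) volume 0 1 :=
    (intervalIntegrable_rpow' (by linarith)).const_mul θ
  rw [integral_mul_deriv_eq_deriv_mul_of_hasDerivAt hk
      (HasDerivAt.continuousOn fun t ht => hF t ht)
      (fun t ht => (hasDerivAt_rpow_const (Or.inl (ne_of_gt (by simpa using ht.1)))).sub_const κ)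
      (fun t ht => hF t (Ioo_subset_Icc_self ht)) hk' hF', one_rpow, zero_rpow hθ.ne']
  simp only [mul_assoc, intervalIntegral.integral_const_mul]
  ring

theorem IntervalIntegrable.comp_add_mul {f : ℝ → ℝ} {A B : ℝ}
    (hf : IntervalIntegrable f volume A (A + B)) (hB : B ≠ 0) :
    IntervalIntegrable (fun t => f (A + B * t)) volume 0 1 := by
  have := (hf.comp_add_left A).comp_mul_left (c := B)
  simpa only [sub_self, add_sub_cancel_left, zero_div, div_self hB] using this

theorem mul_integral_rpow_sub_mul_deriv_comp {f f' : ℝ → ℝ} {θ A B : ℝ} (hθ : 0 < θ)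
    (κ : ℝ) (hB : B ≠ 0) (hf : ∀ x ∈ uIcc A (A + B), HasDerivAt f (f' x) x)
    (hf' : IntervalIntegrable f' volume A (A + B)) :
    B * ∫ t in (0:ℝ)..1, (t ^ θ - κ) * f' (A + B * t) =
      (1 - κ) * f (A + B) + κ * f A - θ * ∫ t in (0:ℝ)..1, t ^ (θ - 1) * f (A + B * t) := by
  have hF : ∀ t ∈ uIcc (0:ℝ) 1,
      HasDerivAt (fun s => f (A + B * s)) (B * f' (A + B * t)) t := by
    intro t ht
    rw [uIcc_of_le zero_le_one] at ht
    have hmem : A + B * t ∈ uIcc A (A + B) := by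
      convert convex_uIcc A (A + B) left_mem_uIcc right_mem_uIcc (sub_nonneg.2 ht.2) ht.1
        (sub_add_cancel 1 t) using 1
      simp only [smul_eq_mul]
      ring
    exact (hf _ hmem).comp t (((hasDerivAt_id t).const_mul B).const_add A) |>.congr_deriv (by ring)
  have := integral_rpow_sub_mul_deriv hθ κ hF ((hf'.comp_add_mul hB).const_mul B)
  simp only [mul_one, mul_zero, add_zero] at this
  rw [← this, ← intervalIntegral.integral_const_mul]
  congr 1 with t
  ring

theorem simpson_fractional_error_eq {f f' : ℝ → ℝ} {θ c B : ℝ} (hθ : 0 < θ) (hB : 0 < B)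
    (hf : ∀ x ∈ Icc (c - B) (c + B), HasDerivAt f (f' x) x)
    (hf' : IntervalIntegrable f' volume (c - B) (c + B)) :
    1 / 6 * (f (c - B) + 4 * f c + f (c + B)) -
        Gamma (θ + 1) / (2 * B ^ θ) * (rlLeft θ (c - B) c f + rlRight θ c (c + B) f) =
      B / 2 * ((∫ t in (0:ℝ)..1, (t ^ θ - 1 / 3) * f' (c - B + B * t)) -
        ∫ t in (0:ℝ)..1, (t ^ θ - 1 / 3) * f' (c + B - B * t)) := by
  rw [← uIcc_of_le (by linarith)] at hf
  have hc : c ∈ uIcc (c - B) (c + B) := by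
    rw [uIcc_of_le (by linarith)]
    constructor <;> linarith
  have hleft := mul_integral_rpow_sub_mul_deriv_comp hθ (1 / 3) hB.ne' (A := c - B)
    (by rw [sub_add_cancel]; exact fun x hx => hf x (uIcc_subset_uIcc left_mem_uIcc hc hx))
    (by rw [sub_add_cancel]; exact hf'.mono_set (uIcc_subset_uIcc left_mem_uIcc hc))
  have hright := mul_integral_rpow_sub_mul_deriv_comp hθ (1 / 3) (neg_ne_zero.2 hB.ne')
    (A := c + B)
    (by rw [add_neg_cancel_right]; exact fun x hx => hf x (uIcc_subset_uIcc right_mem_uIcc hc hx))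
    (by rw [add_neg_cancel_right]; exact hf'.mono_set (uIcc_subset_uIcc right_mem_uIcc hc))
  simp only [sub_add_cancel, neg_mul, ← sub_eq_add_neg, add_sub_cancel_right] at hleft hright
  have hL := rlLeft_add_eq_integral θ (c - B) hB f
  rw [sub_add_cancel] at hL
  rw [hL, rlRight_add_eq_integral θ c hB f]
  set L := ∫ t in (0:ℝ)..1, t ^ (θ - 1) * f (c - B + B * t)
  set R := ∫ t in (0:ℝ)..1, t ^ (θ - 1) * f (c + B - B * t)
  have hcoef : Gamma (θ + 1) / (2 * B ^ θ) * (B ^ θ / Gamma θ * L + B ^ θ / Gamma θ * R) =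
      θ / 2 * (L + R) := by
    have hΓ : Gamma θ ≠ 0 := (Gamma_pos_of_pos hθ).ne'
    have hBθ : B ^ θ ≠ 0 := (rpow_pos_of_pos hB θ).ne'
    rw [Gamma_add_one hθ.ne']
    field_simp
  rw [hcoef]
  linear_combination -(hleft + hright) / 2

theorem abs_intervalIntegral_mul_le_Lp_mul_Lq {a b p q : ℝ} (hab : a ≤ b)
    (hpq : p.HolderConjugate q) {k g : ℝ → ℝ} (hk : IntervalIntegrable k volume a b)
    (hkp : IntervalIntegrable (fun t => |k t| ^ p) volume a b)
    (hg : IntervalIntegrable g volume a b)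
    (hgq : IntervalIntegrable (fun t => |g t| ^ q) volume a b) :
    |∫ t in a..b, k t * g t| ≤
      (∫ t in a..b, |k t| ^ p) ^ (1 / p) * (∫ t in a..b, |g t| ^ q) ^ (1 / q) := by
  have hmemLp : ∀ {r : ℝ} {u : ℝ → ℝ}, 0 < r → IntervalIntegrable u volume a b →
      IntervalIntegrable (fun t => |u t| ^ r) volume a b →
      MemLp (fun t => |u t|) (ENNReal.ofReal r) (volume.restrict (Ioc a b)) := by
    intro r u hr hu hur
    refine ((integrable_norm_rpow_iff hu.1.aestronglyMeasurable (by simpa using hr)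
      ENNReal.ofReal_ne_top).1 ?_).norm
    rw [ENNReal.toReal_ofReal hr.le]
    simp only [Real.norm_eq_abs]
    exact hur.1
  simp only [integral_of_le hab]
  calc |∫ t in Ioc a b, k t * g t| ≤ ∫ t in Ioc a b, |k t * g t| :=
        MeasureTheory.abs_integral_le_integral_abs
    _ = ∫ t in Ioc a b, |k t| * |g t| := by simp only [abs_mul]
    _ ≤ _ := integral_mul_le_Lp_mul_Lq_of_nonneg hpq (.of_forall fun _ => abs_nonneg _)
        (.of_forall fun _ => abs_nonneg _) (hmemLp hpq.pos hk hkp) (hmemLp hpq.symm.pos hg hgq)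

theorem integral_rpow_mul_add_mul_one_sub_rpow {α : ℝ} (hα : -1 < α) (m X Y : ℝ) :
    ∫ t in (0:ℝ)..1, (t ^ α * X + m * (1 - t ^ α) * Y) = (X + α * m * Y) / (α + 1) := by
  have hrpow : IntervalIntegrable (fun t : ℝ => t ^ α) volume 0 1 := intervalIntegrable_rpow' hα
  have h : (fun t : ℝ => t ^ α * X + m * (1 - t ^ α) * Y) =
      fun t => (X - m * Y) * t ^ α + m * Y := by
    funext t; ring
  have hα1 : α + 1 ≠ 0 := by linarith
  rw [h, integral_add (hrpow.const_mul _) intervalIntegrable_const,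
    intervalIntegral.integral_const_mul, integral_rpow (Or.inl hα), intervalIntegral.integral_const,
    one_rpow, zero_rpow hα1]
  field_simp
  ring

theorem abs_integral_rpow_sub_mul_le {θ q α m X Y : ℝ} (hθ : 0 < θ) (hq : 1 < q)
    (hα : -1 < α) (κ : ℝ) {g : ℝ → ℝ} (hg : IntervalIntegrable g volume 0 1)
    (hbound : ∀ t ∈ Icc (0:ℝ) 1, |g t| ^ q ≤ t ^ α * X + m * (1 - t ^ α) * Y) :
    |∫ t in (0:ℝ)..1, (t ^ θ - κ) * g t| ≤
      (∫ t in (0:ℝ)..1, |t ^ θ - κ| ^ (q / (q - 1))) ^ (1 / (q / (q - 1))) *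
        ((X + α * m * Y) / (α + 1)) ^ (1 / q) := by
  have hpq : (q / (q - 1)).HolderConjugate q :=
    ((holderConjugate_iff_eq_conjExponent hq).2 rfl).symm
  have hk : Continuous fun t : ℝ => t ^ θ - κ :=
    (continuous_rpow_const hθ.le).sub continuous_const
  have hrpow : IntervalIntegrable (fun t : ℝ => t ^ α) volume 0 1 := intervalIntegrable_rpow' hα
  have hbInt : IntervalIntegrable (fun t : ℝ => t ^ α * X + m * (1 - t ^ α) * Y) volume 0 1 :=
    (hrpow.mul_const X).add ((intervalIntegrable_const.sub hrpow).const_mul m |>.mul_const Y)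
  have hgq : IntervalIntegrable (fun t => |g t| ^ q) volume 0 1 := by
    rw [intervalIntegrable_iff_integrableOn_Ioc_of_le zero_le_one] at hbInt ⊢
    refine hbInt.mono' ((continuous_abs.rpow_const fun _ => Or.inr (by linarith)
      ).comp_aestronglyMeasurable hg.1.aestronglyMeasurable) ?_
    filter_upwards [ae_restrict_mem measurableSet_Ioc] with t ht
    rw [Real.norm_of_nonneg (by positivity)]
    exact hbound t (Ioc_subset_Icc_self ht)
  have hgq_le : ∫ t in (0:ℝ)..1, |g t| ^ q ≤ (X + α * m * Y) / (α + 1) := by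
    rw [← integral_rpow_mul_add_mul_one_sub_rpow hα]
    exact integral_mono_on zero_le_one hgq hbInt hbound
  refine (abs_intervalIntegral_mul_le_Lp_mul_Lq zero_le_one hpq (hk.intervalIntegrable 0 1)
    ((hk.abs.rpow_const fun _ => Or.inr hpq.nonneg).intervalIntegrable _ _) hg hgq).trans ?_
  gcongr
  · exact rpow_nonneg (integral_nonneg zero_le_one fun t _ => by positivity) _
  · exact integral_nonneg zero_le_one fun t _ => by positivity

theorem abs_simpson_fractional_error_le {f f' : ℝ → ℝ} {θ c B q α m X Y₁ Y₂ : ℝ}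
    (hθ : 0 < θ) (hB : 0 < B) (hq : 1 < q) (hα : -1 < α)
    (hf : ∀ x ∈ Icc (c - B) (c + B), HasDerivAt f (f' x) x)
    (hf' : IntervalIntegrable f' volume (c - B) (c + B))
    (hleft : ∀ t ∈ Icc (0:ℝ) 1,
      |f' (c - B + B * t)| ^ q ≤ t ^ α * X + m * (1 - t ^ α) * Y₁)
    (hright : ∀ t ∈ Icc (0:ℝ) 1,
      |f' (c + B - B * t)| ^ q ≤ t ^ α * X + m * (1 - t ^ α) * Y₂) :
    |1 / 6 * (f (c - B) + 4 * f c + f (c + B)) -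
        Gamma (θ + 1) / (2 * B ^ θ) * (rlLeft θ (c - B) c f + rlRight θ c (c + B) f)| ≤
      B / 2 * (∫ t in (0:ℝ)..1, |t ^ θ - 1 / 3| ^ (q / (q - 1))) ^ (1 / (q / (q - 1))) *
        (((X + α * m * Y₁) / (α + 1)) ^ (1 / q) +
          ((X + α * m * Y₂) / (α + 1)) ^ (1 / q)) := by
  have hc : c ∈ uIcc (c - B) (c + B) := by
    rw [uIcc_of_le (by linarith)]
    constructor <;> linarith
  have hleft_int : IntervalIntegrable (fun t => f' (c - B + B * t)) volume 0 1 :=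
    (hf'.mono_set (uIcc_subset_uIcc left_mem_uIcc (by rwa [sub_add_cancel]))).comp_add_mul hB.ne'
  have hright_int : IntervalIntegrable (fun t => f' (c + B - B * t)) volume 0 1 := by
    simpa only [neg_mul, ← sub_eq_add_neg] using (hf'.symm.mono_set (uIcc_subset_uIcc
      left_mem_uIcc (by rwa [add_neg_cancel_right, uIcc_comm]))).comp_add_mul (neg_ne_zero.2 hB.ne')
  rw [simpson_fractional_error_eq hθ hB hf hf', abs_mul, abs_of_pos (half_pos hB), mul_assoc]
  gcongr
  refine (abs_sub _ _).trans ?_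
  rw [mul_add]
  exact add_le_add (abs_integral_rpow_sub_mul_le hθ hq hα _ hleft_int hleft)
    (abs_integral_rpow_sub_mul_le hθ hq hα _ hright_int hright)

theorem AlphaMConvexOn.le_of_mem {α m lo hi : ℝ} {g : ℝ → ℝ}
    (hg : AlphaMConvexOn α m lo hi g) {u v t : ℝ} (hu : u ∈ Icc lo hi) (hv : v ∈ Icc lo hi)
    (hmv : m * v ∈ Icc lo hi) (ht : t ∈ Icc (0:ℝ) 1) :
    g (t * u + m * (1 - t) * v) ≤ t ^ α * g u + m * (1 - t ^ α) * g v :=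
  hg u hu v hv t ht <| by
    convert convex_Icc lo hi hu hmv ht.1 (sub_nonneg.2 ht.2) (add_sub_cancel t 1) using 1
    simp only [smul_eq_mul]
    ring

theorem simpson_holder
    (I : Set ℝ) (hI : Set.OrdConnected I) (hI0 : I ⊆ Set.Ici (0:ℝ)) (f f' : ℝ → ℝ) (m a b : ℝ)
    (hm : m ∈ Set.Ioc (0:ℝ) 1) (hab : a < b)
    (hma : m * a ∈ interior I) (hb : b ∈ interior I)
    (hf : ∀ y ∈ interior I, HasDerivAt f (f' y) y)
    (hint : IntervalIntegrable f' MeasureTheory.volume (m * a) (m * b))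
    (α q : ℝ) (hα : α ∈ Set.Icc (0:ℝ) 1) (hq : 1 < q)
    (hconv : AlphaMConvexOn α m (m * a) b (fun u => |f' u| ^ q)) :
    ∀ θ : ℝ, 0 < θ →
      |(1 / 6) * (f (m * a) + 4 * f (m * (a + b) / 2) + f (m * b)) -
          Real.Gamma (θ + 1) * 2 ^ (θ - 1) / (m ^ θ * (b - a) ^ θ) *
            (rlLeft θ (m * a) (m * (a + b) / 2) f + rlRight θ (m * (a + b) / 2) (m * b) f)| ≤
        m * (b - a) / 4 *
            (∫ t in (0:ℝ)..1, |t ^ θ - 1 / 3| ^ (q / (q - 1))) ^ (1 / (q / (q - 1))) *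
          (((|f' (m * (a + b) / 2)| ^ q + α * m * |f' a| ^ q) / (α + 1)) ^ (1 / q) +
            ((|f' (m * (a + b) / 2)| ^ q + α * m * |f' b| ^ q) / (α + 1)) ^ (1 / q)) := by
  intro θ hθ
  obtain ⟨hm0, hm1⟩ := hm
  have hba : 0 < b - a := sub_pos.2 hab
  have ha : 0 ≤ a := (mul_nonneg_iff_of_pos_left hm0).1 (hI0 (interior_subset hma))
  have hmaa : m * a ≤ a := mul_le_of_le_one_left ha hm1
  have hmbb : m * b ≤ b := mul_le_of_le_one_left (by linarith) hm1
  set c := m * (a + b) / 2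
  set B := m * (b - a) / 2 with hB
  have hB0 : 0 < B := by positivity
  have hcB : c - B = m * a := by ring
  have hcB' : c + B = m * b := by ring
  have hmem : ∀ x, m * a ≤ x → x ≤ b → x ∈ Icc (m * a) b := fun _ h₁ h₂ => ⟨h₁, h₂⟩
  have hc : c ∈ Icc (m * a) b := hmem c (by linarith) (by linarith)
  have hbound := abs_simpson_fractional_error_le hθ hB0 hq (by linarith [hα.1])
    (c := c) (B := B) (α := α) (m := m) (f := f)
    (fun x hx => hf x (hI.interior.out hma hb (hmem x (by linarith [hx.1]) (by linarith [hx.2]))))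
    (by rwa [hcB, hcB'])
    (fun t ht => by
      simpa only [show t * c + m * (1 - t) * a = c - B + B * t by ring] using
        hconv.le_of_mem hc (hmem a hmaa hab.le) (hmem _ le_rfl (by linarith)) ht)
    (fun t ht => by
      simpa only [show t * c + m * (1 - t) * b = c + B - B * t by ring] using
        hconv.le_of_mem hc (hmem b (by linarith) le_rfl) (hmem _ (by nlinarith) hmbb) ht)
  have hcoef : Gamma (θ + 1) * 2 ^ (θ - 1) / (m ^ θ * (b - a) ^ θ) =
      Gamma (θ + 1) / (2 * B ^ θ) := by
    rw [hB, div_rpow (by positivity) zero_le_two, mul_rpow hm0.le hba.le, rpow_sub_one two_ne_zero]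
    field_simp
  rw [hcB, hcB'] at hbound
  rwa [hcoef, show m * (b - a) / 4 = B / 2 by ring]
end

section
/- Let f : I ⊂ [0,∞) → ℝ be differentiable on I°, m ∈ (0,1], ma, b ∈ I° with a < b, and suppose f' is integrable on [ma, mb]. If |f'|^q is (α,m)-convex on [ma,b] for some fixed q > 1 and (α,m) ∈ [0,1]², then for every θ > 0, with p = q/(q−1), the midpoint-type inequality holds: |f(m(a+b)/2) − (Γ(θ+1) 2^{θ−1}/(m^θ (b−a)^θ)) [J_{(m(a+b)/2)−}^θ f(ma) + J_{(m(a+b)/2)+}^θ f(mb)]| ≤ (m(b−a)/4) (1/(θp+1))^{1/p} { ((|f'(m(a+b)/2)|^q + αm |f'(a)|^q)/(α+1))^{1/q} + ((|f'(m(a+b)/2)|^q + αm |f'(b)|^q)/(α+1))^{1/q} }. -/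
open MeasureTheory Set intervalIntegral Real

/-!
Put `c = m a`, `d = m b`, `e = (c + d) / 2` and `r = e - c = d - e`. Integrating by parts in the
two Riemann–Liouville integrals turns the quantity inside the absolute value into
`(∫_c^e (t - c)^θ f' t dt - ∫_e^d (d - t)^θ f' t dt) / (2 r^θ)`. Each half is bounded by Hölder's
inequality, which leaves `∫ |f'|^q` over `[c, e]` and over `[e, d]`. Every `t ∈ [c, e]` is
`s e + m (1 - s) a` with `s = (t - c) / r`, so `(α,m)`-convexity bounds `|f' t|^q` by
`s^α |f' e|^q + m (1 - s^α) |f' a|^q`; integrating in `t` gives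
`r (|f' e|^q + α m |f' a|^q) / (α + 1)`, and symmetrically on `[e, d]` with `b` in place of `a`.
-/

open scoped Interval

lemma integral_rpow_sub_const_mul_deriv {f f' : ℝ → ℝ} {θ c d : ℝ} (hθ : 0 < θ) (hcd : c ≤ d)
    (hf : ∀ t ∈ Icc c d, HasDerivAt f (f' t) t) (hf' : IntervalIntegrable f' volume c d) :
    ∫ t in c..d, (t - c) ^ θ * f' t
      = (d - c) ^ θ * f d - θ * ∫ t in c..d, (t - c) ^ (θ - 1) * f t := by
  rw [← uIcc_of_le hcd] at hf
  have hibp := integral_mul_deriv_eq_deriv_mul_of_hasDerivAt (u := fun t => (t - c) ^ θ)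
    (u' := fun t => θ * (t - c) ^ (θ - 1)) (v := f) (v' := f')
    ((continuous_sub_right c).rpow_const fun _ => Or.inr hθ.le).continuousOn
    (fun t ht => (hf t ht).continuousAt.continuousWithinAt)
    (fun t ht => by
      rw [min_eq_left hcd] at ht
      simpa using ((hasDerivAt_id t).sub_const c).rpow_const (p := θ)
        (Or.inl (sub_pos.2 ht.1).ne'))
    (fun t ht => hf t (Ioo_subset_Icc_self ht))
    (by simpa using ((intervalIntegrable_rpow' (a := 0) (b := d - c)
      (by linarith : -1 < θ - 1)).comp_sub_right c).const_mul θ)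
    hf'
  simp only [hibp, sub_self, zero_rpow hθ.ne', zero_mul, sub_zero, mul_assoc,
    intervalIntegral.integral_const_mul]

lemma integral_rpow_const_sub_mul_deriv {f f' : ℝ → ℝ} {θ c d : ℝ} (hθ : 0 < θ) (hcd : c ≤ d)
    (hf : ∀ t ∈ Icc c d, HasDerivAt f (f' t) t) (hf' : IntervalIntegrable f' volume c d) :
    ∫ t in c..d, (d - t) ^ θ * f' t
      = θ * (∫ t in c..d, (d - t) ^ (θ - 1) * f t) - (d - c) ^ θ * f c := by
  rw [← uIcc_of_le hcd] at hf
  have hibp := integral_mul_deriv_eq_deriv_mul_of_hasDerivAt (u := fun t => (d - t) ^ θ)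
    (u' := fun t => -θ * (d - t) ^ (θ - 1)) (v := f) (v' := f')
    ((continuous_sub_left d).rpow_const fun _ => Or.inr hθ.le).continuousOn
    (fun t ht => (hf t ht).continuousAt.continuousWithinAt)
    (fun t ht => by
      rw [max_eq_right hcd] at ht
      simpa using ((hasDerivAt_id t).const_sub d).rpow_const (p := θ)
        (Or.inl (sub_pos.2 ht.2).ne'))
    (fun t ht => hf t (Ioo_subset_Icc_self ht))
    (by simpa using (((intervalIntegrable_rpow' (a := 0) (b := d - c)
      (by linarith : -1 < θ - 1)).comp_sub_left d).const_mul (-θ)).symm)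
    hf'
  simp only [hibp, sub_self, zero_rpow hθ.ne', zero_mul, zero_sub, mul_assoc,
    intervalIntegral.integral_const_mul]
  ring

lemma sub_gamma_mul_rlLeft_add_rlRight_eq {f f' : ℝ → ℝ} {θ c e d : ℝ} (hθ : 0 < θ)
    (hce : c < e) (hmid : e - c = d - e) (hf : ∀ t ∈ Icc c d, HasDerivAt f (f' t) t)
    (hf' : IntervalIntegrable f' volume c d) :
    f e - Gamma (θ + 1) / (2 * (e - c) ^ θ) * (rlLeft θ c e f + rlRight θ e d f)
      = ((∫ t in c..e, |t - c| ^ θ * f' t) + ∫ t in d..e, |t - d| ^ θ * f' t)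
          / (2 * (e - c) ^ θ) := by
  have hed : e ≤ d := by linarith
  have he : e ∈ [[c, d]] := mem_uIcc_of_le hce.le hed
  have hleft : ∫ t in c..e, |t - c| ^ θ * f' t
      = (e - c) ^ θ * f e - θ * ∫ t in c..e, (t - c) ^ (θ - 1) * f t := by
    rw [← integral_rpow_sub_const_mul_deriv hθ hce.le (fun t ht => hf t ⟨ht.1, ht.2.trans hed⟩)
      (hf'.mono_set (uIcc_subset_uIcc_left he))]
    refine integral_congr fun t ht => ?_
    rw [uIcc_of_le hce.le] at ht
    simp only [abs_of_nonneg (sub_nonneg.2 ht.1)]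
  have hright : ∫ t in d..e, |t - d| ^ θ * f' t
      = (d - e) ^ θ * f e - θ * ∫ t in e..d, (d - t) ^ (θ - 1) * f t := by
    calc ∫ t in d..e, |t - d| ^ θ * f' t = -∫ t in e..d, (d - t) ^ θ * f' t := by
          rw [integral_symm]
          refine congrArg _ (integral_congr fun t ht => ?_)
          rw [uIcc_of_le hed] at ht
          simp only [abs_sub_comm t d, abs_of_nonneg (sub_nonneg.2 ht.2)]
      _ = _ := by
          rw [integral_rpow_const_sub_mul_deriv hθ hed (fun t ht => hf t ⟨hce.le.trans ht.1, ht.2⟩)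
            (hf'.mono_set (uIcc_subset_uIcc_right he))]
          ring
  have hpos : 0 < (e - c) ^ θ := rpow_pos_of_pos (sub_pos.2 hce) θ
  rw [hleft, hright, ← hmid, rlLeft, rlRight, Gamma_add_one hθ.ne']
  field_simp
  ring

lemma integral_uIoc_abs_sub_rpow {x y s : ℝ} (hs : -1 < s) :
    ∫ t in Ι x y, |t - x| ^ s = |y - x| ^ (s + 1) / (s + 1) := by
  have h0 : (0 : ℝ) ^ (s + 1) = 0 := zero_rpow (by linarith)
  rcases le_total x y with hxy | hyx
  · rw [uIoc_of_le hxy, ← integral_of_le hxy, abs_of_nonneg (sub_nonneg.2 hxy)]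
    calc ∫ t in x..y, |t - x| ^ s = ∫ t in x..y, (t - x) ^ s :=
          integral_congr fun t ht => by
            rw [abs_of_nonneg (sub_nonneg.2 (uIcc_of_le hxy ▸ ht).1)]
      _ = _ := by
        rw [integral_comp_sub_right (· ^ s), sub_self, integral_rpow (Or.inl hs), h0, sub_zero]
  · rw [uIoc_of_ge hyx, ← integral_of_le hyx, abs_of_nonpos (sub_nonpos.2 hyx), neg_sub]
    calc ∫ t in y..x, |t - x| ^ s = ∫ t in y..x, (x - t) ^ s :=
          integral_congr fun t ht => by
            rw [abs_sub_comm, abs_of_nonneg (sub_nonneg.2 (uIcc_of_le hyx ▸ ht).2)]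
      _ = _ := by
        rw [integral_comp_sub_left (· ^ s), sub_self, integral_rpow (Or.inl hs), h0, sub_zero]

lemma integral_uIoc_abs_sub_rpow_mul_le {g : ℝ → ℝ} {x y θ p q : ℝ} (hpq : p.HolderConjugate q)
    (hθ : 0 ≤ θ) (hg : AEStronglyMeasurable g (volume.restrict (Ι x y)))
    (hgq : IntegrableOn (fun t => |g t| ^ q) (Ι x y)) :
    ∫ t in Ι x y, |t - x| ^ θ * |g t|
      ≤ (|y - x| ^ (θ * p + 1) / (θ * p + 1)) ^ (1 / p)
          * (∫ t in Ι x y, |g t| ^ q) ^ (1 / q) := by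
  have : IsFiniteMeasure (volume.restrict (Ι x y)) := isFiniteMeasure_restrict.2 (by simp)
  have hkernel : MemLp (fun t => |t - x| ^ θ) (ENNReal.ofReal p) (volume.restrict (Ι x y)) := by
    refine MemLp.of_bound (Continuous.aestronglyMeasurable
      ((continuous_sub_right x).abs.rpow_const fun _ => Or.inr hθ)) (|y - x| ^ θ)
      ((ae_restrict_iff' measurableSet_uIoc).2 (ae_of_all _ fun t ht => ?_))
    rw [norm_of_nonneg (rpow_nonneg (abs_nonneg _) θ)]
    exact rpow_le_rpow (abs_nonneg _) (abs_sub_left_of_mem_uIcc (uIoc_subset_uIcc ht)) hθ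
  have hgLq : MemLp (fun t => |g t|) (ENNReal.ofReal q) (volume.restrict (Ι x y)) := by
    rw [← integrable_norm_rpow_iff (f := fun t => |g t|) hg.norm (by simp [hpq.symm.pos])
      (by simp), ENNReal.toReal_ofReal hpq.symm.nonneg]
    simpa [IntegrableOn] using hgq
  have hholder := integral_mul_le_Lp_mul_Lq_of_nonneg hpq
    (ae_of_all _ fun t => rpow_nonneg (abs_nonneg (t - x)) θ)
    (ae_of_all _ fun t => abs_nonneg (g t)) hkernel hgLq
  have hpow : ∫ t in Ι x y, (|t - x| ^ θ) ^ p = |y - x| ^ (θ * p + 1) / (θ * p + 1) := by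
    simp_rw [← rpow_mul (abs_nonneg _)]
    exact integral_uIoc_abs_sub_rpow (by nlinarith [hpq.pos])
  rwa [hpow] at hholder

lemma continuous_abs_sub_div_rpow {x r α : ℝ} (hα : 0 ≤ α) :
    Continuous fun t => (|t - x| / r) ^ α :=
  ((continuous_sub_right x).abs.div_const r).rpow_const fun _ => Or.inr hα

/-- The bound that `(α,m)`-convexity gives at `t = s y + m (1 - s) v` when `x = m v` and
`s = |t - x| / |y - x|`; `A` and `B` stand for the values at `y` and `v`. -/
noncomputable def alphaMInterp (α m x y A B t : ℝ) : ℝ :=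
  (|t - x| / |y - x|) ^ α * A + m * (1 - (|t - x| / |y - x|) ^ α) * B

lemma continuous_alphaMInterp {α m x y A B : ℝ} (hα : 0 ≤ α) :
    Continuous (alphaMInterp α m x y A B) := by
  have hw : Continuous fun t => (|t - x| / |y - x|) ^ α := continuous_abs_sub_div_rpow hα
  unfold alphaMInterp
  fun_prop

lemma integral_uIoc_alphaMInterp {α m x y A B : ℝ} (hα : 0 ≤ α) (hxy : x ≠ y) :
    ∫ t in Ι x y, alphaMInterp α m x y A B t = |y - x| * ((A + α * m * B) / (α + 1)) := by
  have hr : 0 < |y - x| := abs_pos.2 (sub_ne_zero.2 hxy.symm)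
  have hw : Continuous fun t => (|t - x| / |y - x|) ^ α := continuous_abs_sub_div_rpow hα
  have hw_int : ∫ t in Ι x y, (|t - x| / |y - x|) ^ α = |y - x| / (α + 1) := by
    simp only [div_rpow (abs_nonneg _) hr.le, MeasureTheory.integral_div]
    rw [integral_uIoc_abs_sub_rpow (by linarith), rpow_add_one hr.ne']
    field_simp
  have hvol : ∫ _ in Ι x y, (1 : ℝ) = |y - x| := by
    simp [measureReal_def, Real.volume_uIoc]
  calc ∫ t in Ι x y, alphaMInterp α m x y A B t
        = ∫ t in Ι x y, ((A - m * B) * (|t - x| / |y - x|) ^ α + m * B * 1) := by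
          congr 1
          funext t
          rw [alphaMInterp]
          ring
    _ = |y - x| * ((A + α * m * B) / (α + 1)) := by
        rw [integral_add (hw.integrableOn_uIoc.const_mul _) continuous_const.integrableOn_uIoc,
          MeasureTheory.integral_const_mul, MeasureTheory.integral_const_mul, hw_int, hvol]
        field_simp
        ring

lemma AlphaMConvexOn.le_alphaMInterp {α m c d : ℝ} {g : ℝ → ℝ} (hg : AlphaMConvexOn α m c d g)
    {u v t : ℝ} (hu : u ∈ Icc c d) (hv : v ∈ Icc c d) (huv : m * v ≠ u) (ht : t ∈ [[m * v, u]])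
    (htcd : t ∈ Icc c d) :
    g t ≤ alphaMInterp α m (m * v) u (g u) (g v) t := by
  set s := (t - m * v) / (u - m * v) with hs
  have hne : u - m * v ≠ 0 := sub_ne_zero.2 huv.symm
  have hs0 : 0 ≤ s := by
    rcases mem_uIcc.1 ht with h | h
    · exact div_nonneg (by linarith) (by linarith)
    · exact div_nonneg_of_nonpos (by linarith) (by linarith)
  have hs_abs : |t - m * v| / |u - m * v| = s := by rw [← abs_div, abs_of_nonneg hs0]
  have hs1 : s ≤ 1 := hs_abs ▸ div_le_one_of_le₀ (abs_sub_left_of_mem_uIcc ht) (abs_nonneg _)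
  have hpt : s * u + m * (1 - s) * v = t := by
    rw [hs]
    field_simp
    ring
  have key := hg u hu v hv s ⟨hs0, hs1⟩ (hpt ▸ htcd)
  rw [hpt] at key
  rwa [alphaMInterp, hs_abs]

lemma rpow_div_rpow_mul_rpow_eq {p q θ r C : ℝ} (hpq : p.HolderConjugate q) (hθ : 0 ≤ θ)
    (hr : 0 < r) (hC : 0 ≤ C) :
    (r ^ (θ * p + 1) / (θ * p + 1)) ^ (1 / p) * (r * C) ^ (1 / q)
      = r ^ (θ + 1) * (1 / (θ * p + 1)) ^ (1 / p) * C ^ (1 / q) := by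
  have hexp : (θ * p + 1) * (1 / p) + 1 / q = θ + 1 := by
    have := hpq.one_div_add_one_div
    field_simp [hpq.ne_zero] at this ⊢
    linarith
  rw [div_eq_mul_one_div (r ^ _), mul_rpow (rpow_nonneg hr.le _) (by have := hpq.pos; positivity),
    mul_rpow hr.le hC, ← rpow_mul hr.le, ← hexp, rpow_add hr]
  ring

lemma abs_integral_abs_sub_rpow_mul_le_of_le_alphaMInterp {g : ℝ → ℝ} {x y θ p q α m A B : ℝ}
    (hpq : p.HolderConjugate q) (hθ : 0 ≤ θ) (hα : 0 ≤ α) (hxy : x ≠ y)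
    (hg : IntervalIntegrable g volume x y)
    (hbound : ∀ t ∈ Ι x y, |g t| ^ q ≤ alphaMInterp α m x y A B t) :
    |∫ t in x..y, |t - x| ^ θ * g t|
      ≤ |y - x| ^ (θ + 1) * (1 / (θ * p + 1)) ^ (1 / p)
          * ((A + α * m * B) / (α + 1)) ^ (1 / q) := by
  have hr : 0 < |y - x| := abs_pos.2 (sub_ne_zero.2 hxy.symm)
  have hgm : AEStronglyMeasurable g (volume.restrict (Ι x y)) := hg.def'.aestronglyMeasurable
  have hinterp : IntegrableOn (alphaMInterp α m x y A B) (Ι x y) :=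
    (continuous_alphaMInterp hα).integrableOn_uIoc
  have hbound' : (fun t => |g t| ^ q) ≤ᵐ[volume.restrict (Ι x y)] alphaMInterp α m x y A B :=
    (ae_restrict_iff' measurableSet_uIoc).2 (ae_of_all _ hbound)
  have hgq_nonneg : 0 ≤ᵐ[volume.restrict (Ι x y)] fun t => |g t| ^ q :=
    ae_of_all _ fun t => rpow_nonneg (abs_nonneg (g t)) q
  have hgq : IntegrableOn (fun t => |g t| ^ q) (Ι x y) := by
    refine hinterp.mono'
      ((continuous_abs.rpow_const fun _ => Or.inr hpq.symm.nonneg).comp_aestronglyMeasurable hgm)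
      (hbound'.mono fun t ht => ?_)
    rwa [norm_of_nonneg (rpow_nonneg (abs_nonneg _) q)]
  have hgq_le : ∫ t in Ι x y, |g t| ^ q ≤ |y - x| * ((A + α * m * B) / (α + 1)) :=
    (integral_mono_of_nonneg hgq_nonneg hinterp hbound').trans_eq
      (integral_uIoc_alphaMInterp hα hxy)
  have hC : 0 ≤ (A + α * m * B) / (α + 1) := by
    have := (integral_nonneg fun t => rpow_nonneg (abs_nonneg (g t)) q).trans hgq_le
    exact nonneg_of_mul_nonneg_right this hr
  calc |∫ t in x..y, |t - x| ^ θ * g t| ≤ ∫ t in Ι x y, |t - x| ^ θ * |g t| := by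
        simpa [abs_mul, abs_of_nonneg (rpow_nonneg (abs_nonneg _) θ)]
          using norm_integral_le_integral_norm_uIoc (f := fun t => |t - x| ^ θ * g t)
    _ ≤ (|y - x| ^ (θ * p + 1) / (θ * p + 1)) ^ (1 / p)
          * (∫ t in Ι x y, |g t| ^ q) ^ (1 / q) :=
        integral_uIoc_abs_sub_rpow_mul_le hpq hθ hgm hgq
    _ ≤ (|y - x| ^ (θ * p + 1) / (θ * p + 1)) ^ (1 / p)
          * (|y - x| * ((A + α * m * B) / (α + 1))) ^ (1 / q) := by
        have hθp : 0 < θ * p + 1 := by have := hpq.pos; positivity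
        gcongr
        exact one_div_nonneg.2 hpq.symm.nonneg
    _ = _ := rpow_div_rpow_mul_rpow_eq hpq hθ hr hC

lemma AlphaMConvexOn.abs_integral_abs_sub_rpow_mul_le {g : ℝ → ℝ} {α m c d θ p q u v : ℝ}
    (hconv : AlphaMConvexOn α m c d fun t => |g t| ^ q) (hpq : p.HolderConjugate q) (hθ : 0 ≤ θ)
    (hα : 0 ≤ α) (hu : u ∈ Icc c d) (hv : v ∈ Icc c d) (huv : m * v ≠ u)
    (hsub : [[m * v, u]] ⊆ Icc c d) (hg : IntervalIntegrable g volume (m * v) u) :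
    |∫ t in m * v..u, |t - m * v| ^ θ * g t|
      ≤ |u - m * v| ^ (θ + 1) * (1 / (θ * p + 1)) ^ (1 / p)
          * ((|g u| ^ q + α * m * |g v| ^ q) / (α + 1)) ^ (1 / q) :=
  abs_integral_abs_sub_rpow_mul_le_of_le_alphaMInterp hpq hθ hα huv hg fun _ ht =>
    hconv.le_alphaMInterp hu hv huv (uIoc_subset_uIcc ht) (hsub (uIoc_subset_uIcc ht))

theorem midpoint_holder
    (I : Set ℝ) (hI : Set.OrdConnected I) (hI0 : I ⊆ Set.Ici (0:ℝ)) (f f' : ℝ → ℝ) (m a b : ℝ)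
    (hm : m ∈ Set.Ioc (0:ℝ) 1) (hab : a < b)
    (hma : m * a ∈ interior I) (hb : b ∈ interior I)
    (hf : ∀ y ∈ interior I, HasDerivAt f (f' y) y)
    (hint : IntervalIntegrable f' MeasureTheory.volume (m * a) (m * b))
    (α q : ℝ) (hα : α ∈ Set.Icc (0:ℝ) 1) (hq : 1 < q)
    (hconv : AlphaMConvexOn α m (m * a) b (fun u => |f' u| ^ q)) :
    ∀ θ : ℝ, 0 < θ →
      |f (m * (a + b) / 2) -
          Real.Gamma (θ + 1) * 2 ^ (θ - 1) / (m ^ θ * (b - a) ^ θ) *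
            (rlLeft θ (m * a) (m * (a + b) / 2) f + rlRight θ (m * (a + b) / 2) (m * b) f)| ≤
        m * (b - a) / 4 * (1 / (θ * (q / (q - 1)) + 1)) ^ (1 / (q / (q - 1))) *
          (((|f' (m * (a + b) / 2)| ^ q + α * m * |f' a| ^ q) / (α + 1)) ^ (1 / q) +
            ((|f' (m * (a + b) / 2)| ^ q + α * m * |f' b| ^ q) / (α + 1)) ^ (1 / q)) := by
  intro θ hθ
  obtain ⟨hm0, hm1⟩ := hm
  have hpq : (q / (q - 1)).HolderConjugate q := (HolderConjugate.conjExponent hq).symm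
  have ha : 0 ≤ a := nonneg_of_mul_nonneg_right (hI0 (interior_subset hma)) hm0
  have hmb : m * b ≤ b := mul_le_of_le_one_left (ha.trans hab.le) hm1
  set e := m * (a + b) / 2
  set r := m * (b - a) / 2 with hr_def
  have hr : 0 < r := by have := sub_pos.2 hab; positivity
  have her : e - m * a = r := by ring
  have hre : m * b - e = r := by ring
  have hmem : ∀ x ∈ [m * a, m * b, e, a, b], x ∈ Icc (m * a) b := by
    simp only [List.mem_cons, List.not_mem_nil, or_false]
    rintro x (rfl | rfl | rfl | rfl | rfl) <;> constructor <;> nlinarith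
  have he : e ∈ [[m * a, m * b]] := mem_uIcc_of_le (by linarith) (by linarith)
  have hcoef : Gamma (θ + 1) * 2 ^ (θ - 1) / (m ^ θ * (b - a) ^ θ)
      = Gamma (θ + 1) / (2 * (e - m * a) ^ θ) := by
    rw [her, hr_def, ← mul_rpow hm0.le (sub_pos.2 hab).le, div_rpow (by positivity) zero_le_two,
      rpow_sub_one two_ne_zero]
    field_simp
  have hleft := hconv.abs_integral_abs_sub_rpow_mul_le hpq hθ.le hα.1 (hmem e (by simp))
    (hmem a (by simp)) (by linarith) (uIcc_subset_Icc (hmem _ (by simp)) (hmem e (by simp)))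
    (hint.mono_set (uIcc_subset_uIcc_left he))
  have hright := hconv.abs_integral_abs_sub_rpow_mul_le hpq hθ.le hα.1 (hmem e (by simp))
    (hmem b (by simp)) (by linarith) (uIcc_subset_Icc (hmem _ (by simp)) (hmem e (by simp)))
    (hint.mono_set (uIcc_subset_uIcc right_mem_uIcc he))
  rw [her, abs_of_pos hr] at hleft
  rw [show e - m * b = -r by ring, abs_neg, abs_of_pos hr] at hright
  have hden : 0 < 2 * r ^ θ := mul_pos two_pos (rpow_pos_of_pos hr θ)
  rw [hcoef, sub_gamma_mul_rlLeft_add_rlRight_eq hθ (by linarith) (by ring)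
    (fun t ht => hf t (hI.interior.out hma hb ⟨ht.1, ht.2.trans hmb⟩)) hint, her,
    abs_div, abs_of_pos hden, div_le_iff₀ hden]
  calc _ ≤ _ := abs_add_le _ _
    _ ≤ _ := add_le_add hleft hright
    _ = _ := by rw [rpow_add_one hr.ne', hr_def]; ring
end

section
/- Let f : I ⊂ [0,∞) → ℝ be differentiable on I°, m ∈ (0,1], ma, b ∈ I° with a < b, and suppose f' is integrable on [ma, mb]. Suppose |f'|^q is (α,m)-convex on [ma,b] for some fixed q > 1 and (α,m) ∈ [0,1]², and |f'(u)| ≤ M for all u ∈ [ma,b]. Then for every x ∈ [a,b] and θ > 0, with p = q/(q−1), the Ostrowski-type inequality holds: |((x−a)^θ + (b−x)^θ)/(b−a) · f(mx) − (Γ(θ+1)/(m^θ (b−a))) [J_{(mx)−}^θ f(ma) + J_{(mx)+}^θ f(mb)]| ≤ m M (1/(θp+1))^{1/p} ((1+αm)/(α+1))^{1/q} · ((x−a)^{θ+1} + (b−x)^{θ+1})/(b−a). -/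
/-!
Integrating by parts against the weights `(t - ma)^θ` and `(mb - t)^θ`,
`Γ(θ+1) (J_{(mx)-}^θ f(ma) + J_{(mx)+}^θ f(mb))` is the boundary term
`((mx - ma)^θ + (mb - mx)^θ) f(mx)` corrected by the weighted integrals of `f'`. After the
substitution `t = s·mx + m(1-s)v` (with `v = a` resp. `v = b`) the left-hand side becomes
`m ((x-a)^(θ+1) S_a - (b-x)^(θ+1) S_b) / (b-a)` with `S_v = ∫₀¹ s^θ f'(s·mx + m(1-s)v) ds`.
Hölder's inequality bounds `|S_v|` by `(∫₀¹ s^(θp))^(1/p) (∫₀¹ |f'(s·mx + m(1-s)v)|^q)^(1/q)`,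
and `(α,m)`-convexity of `|f'|^q` together with `|f'| ≤ M` bounds the last integral by
`M^q ∫₀¹ (s^α + m(1 - s^α)) ds = M^q (1 + αm)/(α + 1)`.
-/

open MeasureTheory Set intervalIntegral Real

open scoped ENNReal

theorem intervalIntegrable_sub_rpow {r : ℝ} (hr : -1 < r) (c a b : ℝ) :
    IntervalIntegrable (fun t => (t - c) ^ r) volume a b := by
  simpa using (intervalIntegrable_rpow' (a := a - c) (b := b - c) hr).comp_sub_right c

theorem intervalIntegrable_rpow_sub {r : ℝ} (hr : -1 < r) (c a b : ℝ) :
    IntervalIntegrable (fun t => (c - t) ^ r) volume a b := by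
  simpa using (intervalIntegrable_rpow' (a := c - a) (b := c - b) hr).comp_sub_left c

theorem Gamma_add_one_mul_rlLeft {f f' : ℝ → ℝ} {c d θ : ℝ} (hcd : c ≤ d) (hθ : 0 < θ)
    (hf : ContinuousOn f (Icc c d)) (hf' : ∀ t ∈ Ioo c d, HasDerivAt f (f' t) t)
    (hint : IntervalIntegrable f' volume c d) :
    Real.Gamma (θ + 1) * rlLeft θ c d f = (d - c) ^ θ * f d - ∫ t in c..d, (t - c) ^ θ * f' t := by
  have hibp := integral_mul_deriv_eq_deriv_mul_of_hasDerivAt (u := f) (u' := f')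
    (v := fun t => (t - c) ^ θ) (v' := fun t => θ * (t - c) ^ (θ - 1))
    (by rwa [uIcc_of_le hcd])
    ((continuous_id.sub continuous_const).rpow_const fun _ => Or.inr hθ.le).continuousOn
    (by simpa [hcd] using hf')
    (fun t ht => by
      simp only [hcd, min_eq_left, max_eq_right, mem_Ioo] at ht
      simpa using ((hasDerivAt_id t).sub_const c).rpow_const (p := θ)
        (Or.inl (sub_pos.2 ht.1).ne'))
    hint ((intervalIntegrable_sub_rpow (by linarith) c c d).const_mul θ)
  rw [rlLeft, Real.Gamma_add_one hθ.ne', mul_assoc θ, ← mul_assoc (Real.Gamma θ),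
    mul_one_div_cancel (Real.Gamma_pos_of_pos hθ).ne', one_mul,
    ← intervalIntegral.integral_const_mul,
    integral_congr (g := fun t => f t * (θ * (t - c) ^ (θ - 1))) fun t _ => by ring, hibp,
    integral_congr (g := fun t => (t - c) ^ θ * f' t) fun t _ => by ring]
  simp [Real.zero_rpow hθ.ne', mul_comm]

theorem Gamma_add_one_mul_rlRight {f f' : ℝ → ℝ} {c d θ : ℝ} (hcd : c ≤ d) (hθ : 0 < θ)
    (hf : ContinuousOn f (Icc c d)) (hf' : ∀ t ∈ Ioo c d, HasDerivAt f (f' t) t)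
    (hint : IntervalIntegrable f' volume c d) :
    Real.Gamma (θ + 1) * rlRight θ c d f = (d - c) ^ θ * f c + ∫ t in c..d, (d - t) ^ θ * f' t := by
  have hibp := integral_mul_deriv_eq_deriv_mul_of_hasDerivAt (u := f) (u' := f')
    (v := fun t => -(d - t) ^ θ) (v' := fun t => θ * (d - t) ^ (θ - 1))
    (by rwa [uIcc_of_le hcd])
    ((continuous_const.sub continuous_id).rpow_const fun _ => Or.inr hθ.le).neg.continuousOn
    (by simpa [hcd] using hf')
    (fun t ht => by
      simp only [hcd, min_eq_left, max_eq_right, mem_Ioo] at ht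
      simpa using (((hasDerivAt_id t).const_sub d).rpow_const (p := θ)
        (Or.inl (sub_pos.2 ht.2).ne')).fun_neg)
    hint ((intervalIntegrable_rpow_sub (by linarith) d c d).const_mul θ)
  rw [rlRight, Real.Gamma_add_one hθ.ne', mul_assoc θ, ← mul_assoc (Real.Gamma θ),
    mul_one_div_cancel (Real.Gamma_pos_of_pos hθ).ne', one_mul,
    ← intervalIntegral.integral_const_mul,
    integral_congr (g := fun t => f t * (θ * (d - t) ^ (θ - 1))) fun t _ => by ring, hibp,
    integral_congr (g := fun t => -((d - t) ^ θ * f' t)) fun t _ => by ring]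
  simp [Real.zero_rpow hθ.ne', mul_comm]

theorem integral_sub_rpow_mul_eq {F : ℝ → ℝ} {e u θ : ℝ} (he : e ≤ u) (hθ : 0 ≤ θ) :
    ∫ t in e..u, (t - e) ^ θ * F t
      = (u - e) ^ (θ + 1) * ∫ s in 0..1, s ^ θ * F ((u - e) * s + e) := by
  have h := intervalIntegral.smul_integral_comp_mul_add (a := 0) (b := 1)
    (fun t : ℝ => (t - e) ^ θ * F t) (u - e) e
  simp only [mul_zero, zero_add, mul_one, sub_add_cancel, add_sub_cancel_right, smul_eq_mul] at h
  rw [← h, Real.rpow_add' (sub_nonneg.2 he) (by linarith), Real.rpow_one, mul_comm ((u - e) ^ θ),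
    mul_assoc, ← intervalIntegral.integral_const_mul ((u - e) ^ θ)]
  congr 1
  refine intervalIntegral.integral_congr fun s hs => ?_
  rw [uIcc_of_le zero_le_one] at hs
  simp only [Real.mul_rpow (sub_nonneg.2 he) hs.1, mul_assoc]

theorem integral_rpow_sub_mul_eq {F : ℝ → ℝ} {e u θ : ℝ} (hu : u ≤ e) (hθ : 0 ≤ θ) :
    ∫ t in u..e, (e - t) ^ θ * F t
      = (e - u) ^ (θ + 1) * ∫ s in 0..1, s ^ θ * F ((u - e) * s + e) := by
  have h := intervalIntegral.smul_integral_comp_mul_add (a := 0) (b := 1)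
    (fun t : ℝ => (e - t) ^ θ * F t) (u - e) e
  simp only [mul_zero, zero_add, mul_one, sub_add_cancel, smul_eq_mul] at h
  rw [integral_symm, ← h, ← neg_mul, neg_sub, Real.rpow_add' (sub_nonneg.2 hu) (by linarith),
    Real.rpow_one, mul_comm ((e - u) ^ θ), mul_assoc,
    ← intervalIntegral.integral_const_mul ((e - u) ^ θ)]
  congr 1
  refine intervalIntegral.integral_congr fun s hs => ?_
  rw [uIcc_of_le zero_le_one] at hs
  have : e - ((u - e) * s + e) = (e - u) * s := by ring
  simp only [this, Real.mul_rpow (sub_nonneg.2 hu) hs.1, mul_assoc]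

theorem sub_mul_add_mem_Icc {c d u w s : ℝ} (hu : u ∈ Icc c d) (hw : w ∈ Icc c d)
    (hs : s ∈ Icc (0 : ℝ) 1) : (u - w) * s + w ∈ Icc c d := by
  obtain ⟨hu₁, hu₂⟩ := hu
  obtain ⟨hw₁, hw₂⟩ := hw
  obtain ⟨hs₀, hs₁⟩ := hs
  constructor <;> nlinarith [mul_nonneg hs₀ (sub_nonneg.2 hs₁)]

theorem IntervalIntegrable.comp_sub_mul_add {g : ℝ → ℝ} {e u : ℝ}
    (hg : IntervalIntegrable g volume e u) :
    IntervalIntegrable (fun s => g ((u - e) * s + e)) volume 0 1 := by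
  rcases eq_or_ne (u - e) 0 with h | h
  · simp [h]
  · simpa [h] using (hg.comp_add_right e).comp_mul_left (c := u - e)

theorem IntervalIntegrable.memLp_of_abs_le {g : ℝ → ℝ} {c d M : ℝ}
    (hg : IntervalIntegrable g volume c d) (hM : ∀ t ∈ Icc c d, |g t| ≤ M) (p : ℝ≥0∞) :
    MemLp g p (volume.restrict (Ioc c d)) :=
  MemLp.of_bound hg.1.aestronglyMeasurable M <|
    (ae_restrict_mem measurableSet_Ioc).mono fun t ht => hM t (Ioc_subset_Icc_self ht)

theorem abs_intervalIntegral_mul_le_Lp_mul_Lq_s16 {f g : ℝ → ℝ} {c d p q : ℝ} (hcd : c ≤ d)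
    (hpq : p.HolderConjugate q) (hf : MemLp f (ENNReal.ofReal p) (volume.restrict (Ioc c d)))
    (hg : MemLp g (ENNReal.ofReal q) (volume.restrict (Ioc c d))) :
    |∫ t in c..d, f t * g t|
      ≤ (∫ t in c..d, |f t| ^ p) ^ (1 / p) * (∫ t in c..d, |g t| ^ q) ^ (1 / q) := by
  simp only [integral_of_le hcd, ← Real.norm_eq_abs]
  exact (MeasureTheory.norm_integral_le_integral_norm _).trans
    (by simpa only [norm_mul] using integral_mul_norm_le_Lp_mul_Lq hpq hf hg)

theorem AlphaMConvexOn.integral_comp_segment_le {g : ℝ → ℝ} {α m c d u v K : ℝ}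
    (hconv : AlphaMConvexOn α m c d g) (hα : 0 ≤ α) (hm : 0 ≤ m) (hu : u ∈ Icc c d)
    (hv : v ∈ Icc c d) (hmv : m * v ∈ Icc c d) (hgu : g u ≤ K) (hgv : g v ≤ K)
    (hint : IntervalIntegrable (fun s => g ((u - m * v) * s + m * v)) volume 0 1) :
    ∫ s in 0..1, g ((u - m * v) * s + m * v) ≤ K * ((1 + α * m) / (α + 1)) := by
  have hpt : ∀ s ∈ Icc (0 : ℝ) 1, g ((u - m * v) * s + m * v) ≤ K * m + K * (1 - m) * s ^ α := by
    intro s hs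
    have hsα : s ^ α ≤ 1 := Real.rpow_le_one hs.1 hs.2 hα
    have hseg : (u - m * v) * s + m * v = s * u + m * (1 - s) * v := by ring
    rw [hseg]
    calc g (s * u + m * (1 - s) * v) ≤ s ^ α * g u + m * (1 - s ^ α) * g v :=
          hconv u hu v hv s hs (hseg ▸ sub_mul_add_mem_Icc hu hmv hs)
      _ ≤ s ^ α * K + m * (1 - s ^ α) * K :=
          add_le_add (mul_le_mul_of_nonneg_left hgu (Real.rpow_nonneg hs.1 α))
            (mul_le_mul_of_nonneg_left hgv (mul_nonneg hm (sub_nonneg.2 hsα)))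
      _ = K * m + K * (1 - m) * s ^ α := by ring
  have hbound : IntervalIntegrable (fun s : ℝ => K * m + K * (1 - m) * s ^ α) volume 0 1 :=
    intervalIntegrable_const.add ((intervalIntegrable_rpow' (by linarith)).const_mul _)
  calc ∫ s in 0..1, g ((u - m * v) * s + m * v)
      ≤ ∫ s in 0..1, (K * m + K * (1 - m) * s ^ α) :=
        integral_mono_on zero_le_one hint hbound hpt
    _ = K * ((1 + α * m) / (α + 1)) := by
        rw [integral_add intervalIntegrable_const
          ((intervalIntegrable_rpow' (by linarith)).const_mul _),
          intervalIntegral.integral_const_mul (K * (1 - m)), integral_rpow (Or.inl (by linarith))]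
        simp [Real.zero_rpow (by linarith : α + 1 ≠ 0)]
        field_simp
        ring

theorem AlphaMConvexOn.abs_integral_rpow_mul_le {g : ℝ → ℝ} {α m c d u v M θ p q : ℝ}
    (hconv : AlphaMConvexOn α m c d fun t => |g t| ^ q) (hα : 0 ≤ α) (hm : 0 ≤ m)
    (hpq : p.HolderConjugate q) (hθ : 0 ≤ θ) (hu : u ∈ Icc c d) (hv : v ∈ Icc c d)
    (hmv : m * v ∈ Icc c d) (hg : IntervalIntegrable g volume (m * v) u)
    (hM : ∀ t ∈ Icc c d, |g t| ≤ M) :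
    |∫ s in 0..1, s ^ θ * g ((u - m * v) * s + m * v)|
      ≤ M * (1 / (θ * p + 1)) ^ (1 / p) * ((1 + α * m) / (α + 1)) ^ (1 / q) := by
  set G : ℝ → ℝ := fun s => g ((u - m * v) * s + m * v)
  have hM₀ : 0 ≤ M := (abs_nonneg _).trans (hM u hu)
  have hθp : 0 < θ * p + 1 := by nlinarith [hpq.pos]
  have hGq := hg.comp_sub_mul_add.memLp_of_abs_le
    (fun s hs => hM _ (sub_mul_add_mem_Icc hu hmv hs)) (ENNReal.ofReal q)
  have hw : MemLp (fun s : ℝ => s ^ θ) (ENNReal.ofReal p) (volume.restrict (Ioc 0 1)) :=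
    (intervalIntegrable_rpow' (by linarith)).memLp_of_abs_le (M := 1) (fun s hs => by
      rw [abs_of_nonneg (Real.rpow_nonneg hs.1 θ)]
      exact Real.rpow_le_one hs.1 hs.2 hθ) _
  have hweight : ∫ s in 0..1, |s ^ θ| ^ p = 1 / (θ * p + 1) := by
    rw [integral_congr (g := fun s => s ^ (θ * p)) fun s hs => by
      rw [uIcc_of_le zero_le_one] at hs
      simp only [abs_of_nonneg (Real.rpow_nonneg hs.1 θ), ← Real.rpow_mul hs.1],
      integral_rpow (Or.inl (by linarith))]
    simp [Real.zero_rpow hθp.ne']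
  have hconvG : ∫ s in 0..1, |G s| ^ q ≤ M ^ q * ((1 + α * m) / (α + 1)) :=
    hconv.integral_comp_segment_le hα hm hu hv hmv
      (Real.rpow_le_rpow (abs_nonneg _) (hM u hu) hpq.symm.nonneg)
      (Real.rpow_le_rpow (abs_nonneg _) (hM v hv) hpq.symm.nonneg)
      ((intervalIntegrable_iff_integrableOn_Ioc_of_le zero_le_one).2
        (by simpa [IntegrableOn, ENNReal.toReal_ofReal hpq.symm.nonneg]
          using hGq.integrable_norm_rpow'))
  calc |∫ s in 0..1, s ^ θ * G s|
      ≤ (∫ s in 0..1, |s ^ θ| ^ p) ^ (1 / p) * (∫ s in 0..1, |G s| ^ q) ^ (1 / q) :=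
        abs_intervalIntegral_mul_le_Lp_mul_Lq_s16 zero_le_one hpq hw hGq
    _ ≤ (1 / (θ * p + 1)) ^ (1 / p) * (M ^ q * ((1 + α * m) / (α + 1))) ^ (1 / q) := by
        rw [hweight]
        gcongr
        · exact intervalIntegral.integral_nonneg zero_le_one fun s _ => by positivity
        · exact hpq.symm.one_div_nonneg
    _ = M * (1 / (θ * p + 1)) ^ (1 / p) * ((1 + α * m) / (α + 1)) ^ (1 / q) := by
        rw [Real.mul_rpow (by positivity) (by positivity), ← Real.rpow_mul hM₀,
          mul_one_div_cancel hpq.symm.ne_zero, Real.rpow_one]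
        ring

theorem ostrowski_functional_eq {f f' : ℝ → ℝ} {m a b x θ : ℝ} (hm : 0 < m) (hab : a < b)
    (hx : x ∈ Icc a b) (hθ : 0 < θ) (hf : ∀ t ∈ Icc (m * a) (m * b), HasDerivAt f (f' t) t)
    (hint : IntervalIntegrable f' volume (m * a) (m * b)) :
    ((x - a) ^ θ + (b - x) ^ θ) / (b - a) * f (m * x) -
        Real.Gamma (θ + 1) / (m ^ θ * (b - a)) *
          (rlLeft θ (m * a) (m * x) f + rlRight θ (m * x) (m * b) f)
      = m * ((x - a) ^ (θ + 1) * (∫ s in 0..1, s ^ θ * f' ((m * x - m * a) * s + m * a))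
          - (b - x) ^ (θ + 1) * ∫ s in 0..1, s ^ θ * f' ((m * x - m * b) * s + m * b))
          / (b - a) := by
  have hax : m * a ≤ m * x := mul_le_mul_of_nonneg_left hx.1 hm.le
  have hxb : m * x ≤ m * b := mul_le_mul_of_nonneg_left hx.2 hm.le
  have hx_mem : m * x ∈ uIcc (m * a) (m * b) := mem_uIcc_of_le hax hxb
  have hcont : ContinuousOn f (Icc (m * a) (m * b)) :=
    fun t ht => (hf t ht).continuousAt.continuousWithinAt
  have hL := Gamma_add_one_mul_rlLeft hax hθ (hcont.mono (Icc_subset_Icc le_rfl hxb))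
    (fun t ht => hf t ⟨ht.1.le, ht.2.le.trans hxb⟩)
    (hint.mono_set (uIcc_subset_uIcc left_mem_uIcc hx_mem))
  have hR := Gamma_add_one_mul_rlRight hxb hθ (hcont.mono (Icc_subset_Icc hax le_rfl))
    (fun t ht => hf t ⟨hax.trans ht.1.le, ht.2.le⟩)
    (hint.mono_set (uIcc_subset_uIcc hx_mem right_mem_uIcc))
  rw [integral_sub_rpow_mul_eq hax hθ.le] at hL
  rw [integral_rpow_sub_mul_eq hxb hθ.le] at hR
  have hscale : ∀ y z, z ≤ y → (m * y - m * z) ^ θ = m ^ θ * (y - z) ^ θ ∧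
      (m * y - m * z) ^ (θ + 1) = m ^ θ * m * (y - z) ^ (θ + 1) := fun y z hzy => by
    rw [← mul_sub, Real.mul_rpow hm.le (sub_nonneg.2 hzy), Real.mul_rpow hm.le (sub_nonneg.2 hzy),
      Real.rpow_add_one hm.ne']
    exact ⟨rfl, rfl⟩
  obtain ⟨ha₁, ha₂⟩ := hscale x a hx.1
  obtain ⟨hb₁, hb₂⟩ := hscale b x hx.2
  rw [ha₁, ha₂] at hL
  rw [hb₁, hb₂] at hR
  rw [mul_add, div_mul_eq_mul_div, div_mul_eq_mul_div, div_mul_eq_mul_div, hL, hR]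
  have : m ^ θ ≠ 0 := (Real.rpow_pos_of_pos hm θ).ne'
  have : b - a ≠ 0 := (sub_pos.2 hab).ne'
  field_simp
  ring

theorem ostrowski_holder
    (I : Set ℝ) (hI : Set.OrdConnected I) (hI0 : I ⊆ Set.Ici (0:ℝ)) (f f' : ℝ → ℝ) (m a b : ℝ)
    (hm : m ∈ Set.Ioc (0:ℝ) 1) (hab : a < b)
    (hma : m * a ∈ interior I) (hb : b ∈ interior I)
    (hf : ∀ y ∈ interior I, HasDerivAt f (f' y) y)
    (hint : IntervalIntegrable f' MeasureTheory.volume (m * a) (m * b))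
    (α q : ℝ) (hα : α ∈ Set.Icc (0:ℝ) 1) (hq : 1 < q)
    (hconv : AlphaMConvexOn α m (m * a) b (fun u => |f' u| ^ q))
    (M : ℝ) (hM : ∀ u ∈ Set.Icc (m * a) b, |f' u| ≤ M) :
    ∀ x ∈ Set.Icc a b, ∀ θ : ℝ, 0 < θ →
      |((x - a) ^ θ + (b - x) ^ θ) / (b - a) * f (m * x) -
          Real.Gamma (θ + 1) / (m ^ θ * (b - a)) *
            (rlLeft θ (m * a) (m * x) f + rlRight θ (m * x) (m * b) f)| ≤
        m * M * (1 / (θ * (q / (q - 1)) + 1)) ^ (1 / (q / (q - 1))) *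
            ((1 + α * m) / (α + 1)) ^ (1 / q) *
          (((x - a) ^ (θ + 1) + (b - x) ^ (θ + 1)) / (b - a)) := by
  intro x hx θ hθ
  obtain ⟨hm₀, hm₁⟩ := hm
  -- `0 ≤ a` (from `I ⊆ [0, ∞)`) and `m ≤ 1` keep `a`, `mx` and `mb` inside `[ma, b]`.
  have ha : 0 ≤ a := nonneg_of_mul_nonneg_right (hI0 (interior_subset hma)) hm₀
  have hmx : m * x ≤ b := by nlinarith [hx.1, hx.2]
  have hmb : m * b ≤ b := by nlinarith
  have hma_le : m * a ≤ m * x := mul_le_mul_of_nonneg_left hx.1 hm₀.le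
  have hmx_le : m * x ≤ m * b := mul_le_mul_of_nonneg_left hx.2 hm₀.le
  have hmx_mem : m * x ∈ uIcc (m * a) (m * b) := mem_uIcc_of_le hma_le hmx_le
  have hmaa : m * a ≤ a := by nlinarith
  have hpq : (q / (q - 1)).HolderConjugate q := (Real.HolderConjugate.conjExponent hq).symm
  have hsub : Icc (m * a) b ⊆ interior I := hI.interior.out hma hb
  rw [ostrowski_functional_eq hm₀ hab hx hθ (fun t ht => hf t (hsub ⟨ht.1, ht.2.trans hmb⟩)) hint]
  have hSa := hconv.abs_integral_rpow_mul_le hα.1 hm₀.le hpq hθ.le ⟨hma_le, hmx⟩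
    ⟨hmaa, hab.le⟩ ⟨le_rfl, hmaa.trans hab.le⟩
    (hint.mono_set (uIcc_subset_uIcc left_mem_uIcc hmx_mem)) hM
  have hSb := hconv.abs_integral_rpow_mul_le hα.1 hm₀.le hpq hθ.le ⟨hma_le, hmx⟩
    ⟨hmaa.trans hab.le, le_rfl⟩ ⟨hma_le.trans hmx_le, hmb⟩
    (hint.mono_set (uIcc_subset_uIcc right_mem_uIcc hmx_mem)) hM
  have hA : 0 ≤ (x - a) ^ (θ + 1) := Real.rpow_nonneg (sub_nonneg.2 hx.1) _
  have hB : 0 ≤ (b - x) ^ (θ + 1) := Real.rpow_nonneg (sub_nonneg.2 hx.2) _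
  rw [abs_div, abs_mul, abs_of_pos hm₀, abs_of_pos (sub_pos.2 hab)]
  grw [abs_sub, abs_mul, abs_mul, abs_of_nonneg hA, abs_of_nonneg hB, hSa, hSb]
  · exact le_of_eq (by ring)
  all_goals linarith
end
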